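/- arXiv:1807.07275 — 2 statements merged into one kernel-verified Lean document; each statement's English description precedes it below -/
import Mathlib

section
/- For any fuzzy cover q and any set function v, there exist partitions P and P' of N such that F^V(p) ≥ F^V(q) ≥ F^V(p'), where p and p' are the Boolean representations of P and P' (i.e., p^A = χ_A if A ∈ P and p^A = 0 otherwise). In particular, the maximum and minimum of F^V over all fuzzy covers are attained at partitions. -/
/-!
Let every vertex `i` independently choose a block `A` with probability `q^A_i`. Because `f^v` is
multilinear and the choices of distinct vertices are independent, `f^v(q^A)` is the expectation of
`f^v` at the indicator of the set of vertices that chose `A`; hence `F^V(q)` is a convex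
combination of the scores of the Boolean covers given by the choice functions `σ`, and lies
between the largest and the smallest of them. The blocks `{i | σ i = A}` that are nonempty form a
partition with the same score, the empty ones contributing `f^v(0)` on both sides.
-/

open Finset

def IsFuzzyCover {V : Type*} [Fintype V] [DecidableEq V] (q : Finset V → V → ℝ) : Prop :=
  (∀ A i, 0 ≤ q A i ∧ q A i ≤ 1) ∧ (∀ A i, i ∉ A → q A i = 0) ∧
  (∀ i, ∑ A ∈ (Finset.univ : Finset V).powerset, q A i = 1)

def IsPartition {V : Type*} [Fintype V] [DecidableEq V] (P : Finset (Finset V)) : Prop :=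
  (∀ A ∈ P, A ≠ ∅) ∧ (∀ A ∈ P, ∀ B ∈ P, A ≠ B → Disjoint A B) ∧ P.sup id = Finset.univ

/-- The Boolean representation of a partition as a fuzzy cover:
`p^A = χ_A` if `A ∈ P` and `p^A = 0` otherwise. -/
def partitionCover {V : Type*} [Fintype V] [DecidableEq V]
    (P : Finset (Finset V)) : Finset V → V → ℝ :=
  fun A i => if A ∈ P ∧ i ∈ A then 1 else 0

section ProductWeight

variable {ι κ : Type*} [Fintype ι]

/-- The probability of the labelling `σ` when every `i` independently draws the label `c` with
probability `p i c`. -/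
def productWeight (p : ι → κ → ℝ) (σ : ι → κ) : ℝ := ∏ i, p i (σ i)

theorem productWeight_nonneg {p : ι → κ → ℝ} (hp : ∀ i c, 0 ≤ p i c) (σ : ι → κ) :
    0 ≤ productWeight p σ :=
  prod_nonneg fun i _ => hp i (σ i)

theorem sum_productWeight_mul_prod [Fintype κ] [DecidableEq ι] {p : ι → κ → ℝ}
    (hp : ∀ i, ∑ c, p i c = 1) (B : Finset ι) (g : ι → κ → ℝ) :
    ∑ σ, productWeight p σ * ∏ j ∈ B, g j (σ j) = ∏ j ∈ B, ∑ c, p j c * g j c := by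
  have hσ : ∀ σ : ι → κ, productWeight p σ * ∏ j ∈ B, g j (σ j) =
      ∏ i, p i (σ i) * if i ∈ B then g i (σ i) else 1 := fun σ => by
    rw [prod_mul_distrib, Fintype.prod_ite_mem, productWeight]
  have hi : ∀ i, ∑ c, p i c * (if i ∈ B then g i c else 1) =
      if i ∈ B then ∑ c, p i c * g i c else 1 := fun i => by
    split_ifs
    · rfl
    · simpa using hp i
  rw [sum_congr rfl fun σ _ => hσ σ,
    ← Fintype.prod_sum fun i c => p i c * if i ∈ B then g i c else 1]
  simp_rw [hi, Fintype.prod_ite_mem]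

theorem sum_productWeight [Fintype κ] [DecidableEq ι] {p : ι → κ → ℝ}
    (hp : ∀ i, ∑ c, p i c = 1) : ∑ σ, productWeight p σ = 1 := by
  simpa using sum_productWeight_mul_prod hp ∅ 0

end ProductWeight

section ConvexCombination

variable {ι : Type*} [Fintype ι] {w : ι → ℝ}

theorem exists_sum_mul_le (hw₀ : ∀ i, 0 ≤ w i) (hw₁ : ∑ i, w i = 1) (g : ι → ℝ) :
    ∃ i, ∑ j, w j * g j ≤ g i := by
  have hle := centerMass_le_sup (s := univ) (fun i _ => hw₀ i) (f := g)
    (hw₁ ▸ one_pos)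
  obtain ⟨i, -, hi⟩ := exists_mem_eq_sup' _ g
  rw [centerMass_eq_of_sum_1 _ _ hw₁, hi] at hle
  exact ⟨i, hle⟩

theorem exists_le_sum_mul (hw₀ : ∀ i, 0 ≤ w i) (hw₁ : ∑ i, w i = 1) (g : ι → ℝ) :
    ∃ i, g i ≤ ∑ j, w j * g j := by
  have hle := Finset.inf_le_centerMass (s := univ) (fun i _ => hw₀ i) (f := g)
    (hw₁ ▸ one_pos)
  obtain ⟨i, -, hi⟩ := exists_mem_eq_inf' _ g
  rw [centerMass_eq_of_sum_1 _ _ hw₁, hi] at hle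
  exact ⟨i, hle⟩

end ConvexCombination

section FuzzyCover

variable {V : Type*} [Fintype V]

/-- The multilinear extension of the set function whose Möbius coefficients are `μ`. -/
def multilinearExt (μ : Finset V → ℝ) (x : V → ℝ) : ℝ :=
  ∑ B, (∏ j ∈ B, x j) * μ B

theorem multilinearExt_eq_sum_mul {τ : Type*} [Fintype τ] (μ : Finset V → ℝ) {x : V → ℝ}
    {w : τ → ℝ} {y : τ → V → ℝ}
    (h : ∀ B : Finset V, ∏ j ∈ B, x j = ∑ s, w s * ∏ j ∈ B, y s j) :
    multilinearExt μ x = ∑ s, w s * multilinearExt μ (y s) := by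
  simp only [multilinearExt, h, sum_mul, mul_sum, mul_assoc]
  exact sum_comm

variable [DecidableEq V]

def fiberCover (σ : V → Finset V) : Finset V → V → ℝ :=
  fun A i => if σ i = A then 1 else 0

theorem sum_multilinearExt_eq_sum_productWeight_mul (μ : Finset V → ℝ)
    {q : Finset V → V → ℝ} (hq : ∀ i, ∑ A, q A i = 1) :
    ∑ A, multilinearExt μ (q A) =
      ∑ σ, productWeight (fun i A => q A i) σ * ∑ A, multilinearExt μ (fiberCover σ A) := by
  have hA : ∀ A, multilinearExt μ (q A) =
      ∑ σ, productWeight (fun i A => q A i) σ * multilinearExt μ (fiberCover σ A) :=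
    fun A => multilinearExt_eq_sum_mul μ fun B => by
      simp only [fiberCover]
      rw [sum_productWeight_mul_prod hq B fun _ c => if c = A then 1 else 0]
      simp
  simp_rw [hA, mul_sum]
  exact sum_comm

theorem Finpartition.isPartition (P : Finpartition (univ : Finset V)) : IsPartition P.parts :=
  ⟨fun _ hA => P.ne_bot hA, fun _ hA _ hB hAB => P.disjoint hA hB hAB, P.sup_parts⟩

theorem exists_isPartition_sum_fiber_eq {κ : Type*} [Fintype κ] [DecidableEq κ] (σ : V → κ)
    {h : Finset V → ℝ} (h0 : h ∅ = 0) :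
    ∃ P, IsPartition P ∧ ∑ c, h (univ.filter (σ · = c)) = ∑ C ∈ P, h C := by
  refine ⟨(Finpartition.ofSetoid (Setoid.ker σ)).parts, Finpartition.isPartition _, ?_⟩
  have hparts : (Finpartition.ofSetoid (Setoid.ker σ)).parts =
      (univ.image σ).image fun c => univ.filter (σ · = c) := by
    ext C
    simp [Finpartition.ofSetoid, Finpartition.ofSetSetoid_parts, Setoid.ker, Function.onFun,
      eq_comm]
  have hinj : Set.InjOn (fun c => univ.filter (σ · = c)) (univ.image σ) := by
    simp only [coe_image, coe_univ, Set.image_univ, Set.InjOn, Set.mem_range]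
    rintro _ ⟨i, rfl⟩ _ ⟨j, rfl⟩ hij
    simpa using (Finset.ext_iff.mp hij i).mp (by simp)
  rw [hparts, sum_image hinj]
  refine (sum_subset (subset_univ _) fun c _ hc => ?_).symm
  rw [filter_false_of_mem fun i _ (hi : σ i = c) => hc (hi ▸ mem_image_of_mem σ (mem_univ i)),
    h0]

theorem exists_isPartition_sum_fiberCover_eq (σ : V → Finset V) (g : (V → ℝ) → ℝ) :
    ∃ P, IsPartition P ∧ ∑ A, g (fiberCover σ A) = ∑ A, g (partitionCover P A) := by
  let ind : Finset V → V → ℝ := fun C i => if i ∈ C then 1 else 0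
  -- Subtracting the value of an empty block leaves sums over the nonempty blocks only.
  let h : Finset V → ℝ := fun C => g (ind C) - g (ind ∅)
  obtain ⟨P, hP, hsum⟩ := exists_isPartition_sum_fiber_eq σ (h := h) (sub_self _)
  have hfiber : ∀ A, fiberCover σ A = ind (univ.filter (σ · = A)) := fun A => by
    ext i
    simp [ind, fiberCover]
  have hpart : ∀ A, partitionCover P A = ind (if A ∈ P then A else ∅) := fun A => by
    ext i
    by_cases hA : A ∈ P <;> simp [ind, partitionCover, hA]
  have hshift : ∀ k : Finset V → Finset V,
      ∑ A, g (ind (k A)) = ∑ A, h (k A) + ∑ _A : Finset V, g (ind ∅) := fun k => by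
    rw [← sum_add_distrib]
    simp [h]
  refine ⟨P, hP, ?_⟩
  simp only [hfiber, hpart]
  rw [hshift, hsum, hshift fun A => if A ∈ P then A else ∅]
  congr 1
  have h0 : h ∅ = 0 := sub_self _
  simp only [apply_ite h, h0, Fintype.sum_ite_mem]

end FuzzyCover

theorem fuzzy_score_sandwiched_by_partitions_general
    {V : Type*} [Fintype V] [DecidableEq V]
    (μ : Finset V → ℝ)
    (f : (V → ℝ) → ℝ)
    (hf : ∀ x : V → ℝ, f x = ∑ B ∈ (Finset.univ : Finset V).powerset,
      (∏ j ∈ B, x j) * μ B)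
    (q : Finset V → V → ℝ) (hq : IsFuzzyCover q) :
    ∃ P P' : Finset (Finset V), IsPartition P ∧ IsPartition P' ∧
      (∑ A ∈ (Finset.univ : Finset V).powerset, f (partitionCover P' A)) ≤
        (∑ A ∈ (Finset.univ : Finset V).powerset, f (q A)) ∧
      (∑ A ∈ (Finset.univ : Finset V).powerset, f (q A)) ≤
        (∑ A ∈ (Finset.univ : Finset V).powerset, f (partitionCover P A)) := by
  obtain ⟨hq01, -, hq1⟩ := hq
  simp only [powerset_univ] at hf hq1 ⊢
  obtain rfl : f = multilinearExt μ := funext hf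
  have hw₀ := productWeight_nonneg fun i A => (hq01 A i).1
  have hw₁ := sum_productWeight hq1
  rw [sum_multilinearExt_eq_sum_productWeight_mul μ hq1]
  set score := fun σ => ∑ A, multilinearExt μ (fiberCover σ A)
  obtain ⟨σmax, hmax⟩ := exists_sum_mul_le hw₀ hw₁ score
  obtain ⟨σmin, hmin⟩ := exists_le_sum_mul hw₀ hw₁ score
  obtain ⟨P, hP, hPσ⟩ := exists_isPartition_sum_fiberCover_eq σmax (multilinearExt μ)
  obtain ⟨P', hP', hP'σ⟩ := exists_isPartition_sum_fiberCover_eq σmin (multilinearExt μ)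
  exact ⟨P, P', hP, hP', hP'σ ▸ hmin, hPσ ▸ hmax⟩

/-- The value of the global score on any fuzzy cover is sandwiched between its values
on two partitions: maxima and minima of `F^V` are attained at partitions. -/
theorem fuzzy_score_sandwiched_by_partitions
    {V : Type*} [Fintype V] [DecidableEq V]
    (v : Finset V → ℝ) (μ : Finset V → ℝ)
    (hv : ∀ B : Finset V, v B = ∑ A ∈ B.powerset, μ A)
    (f : (V → ℝ) → ℝ)
    (hf : ∀ x : V → ℝ, f x = ∑ B ∈ (Finset.univ : Finset V).powerset,
      (∏ j ∈ B, x j) * μ B)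
    (q : Finset V → V → ℝ) (hq : IsFuzzyCover q) :
    ∃ P P' : Finset (Finset V), IsPartition P ∧ IsPartition P' ∧
      (∑ A ∈ (Finset.univ : Finset V).powerset, f (partitionCover P' A)) ≤
        (∑ A ∈ (Finset.univ : Finset V).powerset, f (q A)) ∧
      (∑ A ∈ (Finset.univ : Finset V).powerset, f (q A)) ≤
        (∑ A ∈ (Finset.univ : Finset V).powerset, f (partitionCover P A)) :=
  fuzzy_score_sandwiched_by_partitions_general μ f hf q hq
end

section
/- Let P be a partition of N with Boolean representation p, and v a set function with v(∅)=0. Then p is a local optimum of F^V (i.e., F^V(p) ≥ F^V(q_i | p_{-i}) for every vertex i and every alternative membership distribution q_i ∈ Δ_i) if and only if v(A) ≥ v(A\{i}) + v({i}) for every block A ∈ P and every i ∈ A with |A| > 1. -/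
open Finset

lemma aux_f_indicator {V : Type*} [Fintype V] [DecidableEq V]
    (v μ : Finset V → ℝ) (hv : ∀ B : Finset V, v B = ∑ A ∈ B.powerset, μ A)
    (f : (V → ℝ) → ℝ)
    (hf : ∀ x : V → ℝ, f x = ∑ B ∈ (Finset.univ : Finset V).powerset,
      (∏ j ∈ B, x j) * μ B) (S : Finset V) :
    f (fun j => if j ∈ S then 1 else 0) = v S := by
  rw [hf, hv, Finset.powerset_univ]
  have step : ∀ B : Finset V, (∏ j ∈ B, if j ∈ S then (1:ℝ) else 0) * μ B
      = if B ∈ S.powerset then μ B else 0 := by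
    intro B
    rw [Finset.prod_boole]
    by_cases h : B ⊆ S
    · rw [if_pos (fun j hj => h hj), if_pos (Finset.mem_powerset.mpr h), one_mul]
    · rw [if_neg (fun hall => h (fun j hj => hall j hj)),
        if_neg (fun hm => h (Finset.mem_powerset.mp hm)), zero_mul]
  calc ∑ B : Finset V, (∏ j ∈ B, if j ∈ S then (1:ℝ) else 0) * μ B
      = ∑ B : Finset V, (if B ∈ S.powerset then μ B else 0) :=
        Finset.sum_congr rfl fun B _ => step B
    _ = ∑ A ∈ S.powerset, μ A := by rw [Finset.sum_ite_mem, Finset.univ_inter]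

lemma aux_f_affine {V : Type*} [Fintype V] [DecidableEq V]
    (μ : Finset V → ℝ) (f : (V → ℝ) → ℝ)
    (hf : ∀ x : V → ℝ, f x = ∑ B ∈ (Finset.univ : Finset V).powerset,
      (∏ j ∈ B, x j) * μ B) (i : V) (g : V → ℝ) (t : ℝ) :
    f (fun j => if j = i then t else g j)
      = (1 - t) * f (fun j => if j = i then 0 else g j)
        + t * f (fun j => if j = i then 1 else g j) := by
  rw [hf, hf, hf, Finset.mul_sum, Finset.mul_sum, ← Finset.sum_add_distrib]
  refine Finset.sum_congr rfl fun B _ => ?_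
  have key : ∀ (a : ℝ), ∏ j ∈ B.erase i, (if j = i then a else g j) = ∏ j ∈ B.erase i, g j :=
    fun a => Finset.prod_congr rfl fun j hj => if_neg (Finset.ne_of_mem_erase hj)
  by_cases hi : i ∈ B
  · rw [← Finset.mul_prod_erase B _ hi, ← Finset.mul_prod_erase B _ hi,
      ← Finset.mul_prod_erase B _ hi, key, key, key, if_pos rfl, if_pos rfl, if_pos rfl]
    ring
  · have key2 : ∀ (a : ℝ), ∏ j ∈ B, (if j = i then a else g j) = ∏ j ∈ B, g j :=
      fun a => Finset.prod_congr rfl fun j hj => if_neg (by rintro rfl; exact hi hj)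
    rw [key2, key2, key2]; ring

/-- A partition `P` is a local optimum of the global score `F^V` (no single vertex can
profitably deviate to another membership distribution over its simplex `Δ_i`) if and
only if `v(A) ≥ v(A\{i}) + v({i})` for every block `A ∈ P` and `i ∈ A` with `|A| > 1`. -/
theorem partition_local_optimum_iff
    {V : Type*} [Fintype V] [DecidableEq V]
    (v : Finset V → ℝ) (μ : Finset V → ℝ)
    (hv : ∀ B : Finset V, v B = ∑ A ∈ B.powerset, μ A)
    (hv0 : v ∅ = 0)
    (f : (V → ℝ) → ℝ)
    (hf : ∀ x : V → ℝ, f x = ∑ B ∈ (Finset.univ : Finset V).powerset,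
      (∏ j ∈ B, x j) * μ B)
    (P : Finset (Finset V)) (hP : IsPartition P) :
    (∀ i : V, ∀ qi : Finset V → ℝ,
      (∀ A : Finset V, 0 ≤ qi A) → (∀ A : Finset V, i ∉ A → qi A = 0) →
      (∑ A ∈ (Finset.univ : Finset V).powerset, qi A) = 1 →
      (∑ A ∈ (Finset.univ : Finset V).powerset,
          f (fun j => if j = i then qi A else partitionCover P A j)) ≤
        (∑ A ∈ (Finset.univ : Finset V).powerset, f (partitionCover P A))) ↔
    (∀ A ∈ P, ∀ i ∈ A, 1 < A.card → v (A.erase i) + v {i} ≤ v A) := by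
  -- the cover as indicator functions
  have hpc : ∀ A : Finset V, partitionCover P A
      = fun j => if j ∈ (if A ∈ P then A else ∅) then (1:ℝ) else 0 := by
    intro A
    funext j
    simp only [partitionCover]
    by_cases hA : A ∈ P <;> simp [hA]
  -- value of the unperturbed total score
  have hRHS : ∑ A ∈ (Finset.univ : Finset V).powerset, f (partitionCover P A)
      = ∑ A ∈ (Finset.univ : Finset V).powerset, v (if A ∈ P then A else ∅) :=
    Finset.sum_congr rfl fun A _ => by
      rw [hpc A]; exact aux_f_indicator v μ hv f hf _
  -- value of the perturbed total score
  have hLHS : ∀ (i : V) (qi : Finset V → ℝ),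
      ∑ A ∈ (Finset.univ : Finset V).powerset,
        f (fun j => if j = i then qi A else partitionCover P A j)
      = ∑ A ∈ (Finset.univ : Finset V).powerset,
        ((1 - qi A) * v ((if A ∈ P then A else ∅).erase i)
          + qi A * v (insert i (if A ∈ P then A else ∅))) := by
    intro i qi
    refine Finset.sum_congr rfl fun A _ => ?_
    have h1 : (fun j => if j = i then qi A else partitionCover P A j)
        = fun j => if j = i then qi A
            else if j ∈ (if A ∈ P then A else ∅) then (1:ℝ) else 0 := by
      rw [hpc A]
    rw [h1, aux_f_affine μ f hf i _ (qi A)]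
    have e0 : (fun j => if j = i then (0:ℝ)
          else if j ∈ (if A ∈ P then A else ∅) then 1 else 0)
        = fun j => if j ∈ (if A ∈ P then A else ∅).erase i then 1 else 0 := by
      funext j
      by_cases hj : j = i
      · subst hj; simp
      · simp [hj, Finset.mem_erase]
    have e1 : (fun j => if j = i then (1:ℝ)
          else if j ∈ (if A ∈ P then A else ∅) then 1 else 0)
        = fun j => if j ∈ insert i (if A ∈ P then A else ∅) then 1 else 0 := by
      funext j
      by_cases hj : j = i
      · subst hj; simp
      · simp [hj, Finset.mem_insert]
    rw [e0, e1, aux_f_indicator v μ hv f hf, aux_f_indicator v μ hv f hf]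
  -- partition facts
  have huniq : ∀ {i : V} {A B : Finset V}, A ∈ P → B ∈ P → i ∈ A → i ∈ B → A = B := by
    intro i A B hA hB hiA hiB
    by_contra hne
    exact (Finset.disjoint_left.mp (hP.2.1 A hA B hB hne)) hiA hiB
  have hblock : ∀ i : V, ∃ A ∈ P, i ∈ A := by
    intro i
    have : i ∈ P.sup id := hP.2.2 ▸ Finset.mem_univ i
    obtain ⟨A, hA, hiA⟩ := Finset.mem_sup.mp this
    exact ⟨A, hA, hiA⟩
  -- the key identity
  have hkey : ∀ (i : V) (qi : Finset V → ℝ), (∀ A : Finset V, i ∉ A → qi A = 0) →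
      (∑ A ∈ (Finset.univ : Finset V).powerset, qi A) = 1 →
      ∀ Ast ∈ P, i ∈ Ast →
      ∑ A ∈ (Finset.univ : Finset V).powerset,
        ((1 - qi A) * v ((if A ∈ P then A else ∅).erase i)
          + qi A * v (insert i (if A ∈ P then A else ∅)))
      = ∑ A ∈ (Finset.univ : Finset V).powerset, v (if A ∈ P then A else ∅)
        + (1 - qi Ast) * (v {i} - (v Ast - v (Ast.erase i))) := by
    intro i qi h1 h2 Ast hAst hiAst
    have hterm : ∀ A ∈ (Finset.univ : Finset V).powerset,
        ((1 - qi A) * v ((if A ∈ P then A else ∅).erase i)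
          + qi A * v (insert i (if A ∈ P then A else ∅))
          - v (if A ∈ P then A else ∅) - qi A * v {i})
        = if A = Ast then ((qi Ast - 1) * (v Ast - v (Ast.erase i)) - qi Ast * v {i})
          else 0 := by
      intro A _
      by_cases hA : A ∈ P
      · by_cases hAe : A = Ast
        · subst hAe
          rw [if_pos rfl, if_pos hA, Finset.insert_eq_self.mpr hiAst]
          ring
        · rw [if_neg hAe, if_pos hA]
          have hiA : i ∉ A := fun hiA => hAe (huniq hA hAst hiA hiAst)
          rw [h1 A hiA, Finset.erase_eq_of_notMem hiA]
          ring
      · have hAe : A ≠ Ast := by rintro rfl; exact hA hAst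
        rw [if_neg hAe, if_neg hA, Finset.erase_empty, Finset.insert_empty, hv0]
        ring
    have hsum : ∑ A ∈ (Finset.univ : Finset V).powerset,
        ((1 - qi A) * v ((if A ∈ P then A else ∅).erase i)
          + qi A * v (insert i (if A ∈ P then A else ∅))
          - v (if A ∈ P then A else ∅) - qi A * v {i})
        = (qi Ast - 1) * (v Ast - v (Ast.erase i)) - qi Ast * v {i} := by
      refine Eq.trans (Finset.sum_congr rfl hterm) ?_
      rw [Finset.sum_ite_eq' _ Ast
        (fun _ => (qi Ast - 1) * (v Ast - v (Ast.erase i)) - qi Ast * v {i}),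
        if_pos (Finset.mem_powerset.mpr (Finset.subset_univ _))]
    rw [Finset.sum_sub_distrib, Finset.sum_sub_distrib, ← Finset.sum_mul, h2] at hsum
    linarith
  constructor
  · -- local optimum → condition
    intro h A hA i hiA hcard
    set qi : Finset V → ℝ := fun B => if B = ({i} : Finset V) then 1 else 0 with hqidef
    have h0 : ∀ B : Finset V, 0 ≤ qi B := by
      intro B; dsimp [qi]; split <;> norm_num
    have h1 : ∀ B : Finset V, i ∉ B → qi B = 0 := by
      intro B hB
      exact if_neg (by rintro rfl; exact hB (Finset.mem_singleton_self i))
    have h2 : ∑ B ∈ (Finset.univ : Finset V).powerset, qi B = 1 := by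
      dsimp [qi]
      rw [Finset.sum_ite_eq' _ ({i} : Finset V) (fun _ => (1:ℝ)),
        if_pos (Finset.mem_powerset.mpr (Finset.subset_univ _))]
    have hineq := h i qi h0 h1 h2
    rw [hLHS i qi, hRHS, hkey i qi h1 h2 A hA hiA] at hineq
    have hqA : qi A = 0 := by
      refine if_neg fun hA1 => ?_
      rw [hA1, Finset.card_singleton] at hcard
      exact lt_irrefl 1 hcard
    rw [hqA] at hineq
    nlinarith [hineq]
  · -- condition → local optimum
    intro h i qi h0 h1 h2
    obtain ⟨Ast, hAst, hiAst⟩ := hblock i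
    rw [hLHS i qi, hRHS, hkey i qi h1 h2 Ast hAst hiAst]
    have hq1 : qi Ast ≤ 1 := by
      have := Finset.single_le_sum (f := qi) (fun B _ => h0 B)
        (Finset.mem_powerset.mpr (Finset.subset_univ Ast))
      linarith [h2 ▸ this]
    have hfac : (1 - qi Ast) * (v {i} - (v Ast - v (Ast.erase i))) ≤ 0 := by
      rcases lt_or_ge 1 Ast.card with hc | hc
      · refine mul_nonpos_of_nonneg_of_nonpos (by linarith) ?_
        have := h Ast hAst i hiAst hc
        linarith
      · have hAs : Ast = {i} := by
          have h1c : Ast.card = 1 := le_antisymm hc (Finset.card_pos.mpr ⟨i, hiAst⟩)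
          obtain ⟨a, ha⟩ := Finset.card_eq_one.mp h1c
          rw [ha] at hiAst ⊢
          rw [Finset.mem_singleton] at hiAst
          rw [hiAst]
        rw [hAs, Finset.erase_singleton, hv0]
        ring_nf
        simp
    linarith
end
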